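/- Let β > 0, L > 0, and let k be the largest integer strictly less than β. Suppose f : [0,1] → ℝ is k times differentiable, |f(x)| ≤ 1 for all x ∈ [0,1], and f satisfies the Hölder condition |f^{(k)}(x) - f^{(k)}(y)| ≤ L|x-y|^{β-k} for all x,y ∈ [0,1]. Then there exists a constant c depending only on β and L (not on f) such that |f^{(r)}(x)| ≤ c for all 1 ≤ r ≤ k and all x ∈ [0,1]. -/

import Mathlib

/-!
A bounded function has, for each `r`, a point in every interval `[a, b]` where its `r`-th
derivative is `O((b - a)⁻ʳ)`: apply the mean value theorem to the `(r - 1)`-st derivative between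
two such points chosen in the outer thirds of `[a, b]`. The Hölder condition then bounds the
`k`-th derivative on all of `[0, 1]` by its value at one such point plus `L`, and going down in
`r`, a derivative that is small at one point and has bounded derivative is bounded.
-/

open Set

noncomputable def smallDerivConst : ℕ → ℝ
  | 0 => 1
  | r + 1 => 2 * 3 ^ (r + 1) * smallDerivConst r

lemma smallDerivConst_nonneg : ∀ r, 0 ≤ smallDerivConst r
  | 0 => zero_le_one
  | r + 1 => by
    have := smallDerivConst_nonneg r
    simp only [smallDerivConst]
    positivity

lemma exists_derivWithin_Icc_eq_slope {g : ℝ → ℝ} {u v a b : ℝ}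
    (hg : DifferentiableOn ℝ g (Icc u v)) (hua : u ≤ a) (hab : a < b) (hbv : b ≤ v) :
    ∃ η ∈ Ioo a b, derivWithin g (Icc u v) η = (g b - g a) / (b - a) := by
  have hsub : Icc a b ⊆ Icc u v := Icc_subset_Icc hua hbv
  have hnhds : ∀ η ∈ Ioo a b, Icc u v ∈ nhds η := fun η hη =>
    Icc_mem_nhds (hua.trans_lt hη.1) (hη.2.trans_le hbv)
  obtain ⟨η, hη, hslope⟩ := exists_deriv_eq_slope g hab (hg.continuousOn.mono hsub)
    fun η hη => ((hg η (hsub (Ioo_subset_Icc_self hη))).differentiableAt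
      (hnhds η hη)).differentiableWithinAt
  exact ⟨η, hη, by rw [derivWithin_of_mem_nhds (hnhds η hη), hslope]⟩

lemma exists_abs_iteratedDerivWithin_le {f : ℝ → ℝ} {u v M : ℝ} {r : ℕ}
    (hf : ContDiffOn ℝ r f (Icc u v)) (hM : ∀ x ∈ Icc u v, |f x| ≤ M)
    {a b : ℝ} (hua : u ≤ a) (hab : a < b) (hbv : b ≤ v) :
    ∃ ξ ∈ Icc a b,
      |iteratedDerivWithin r f (Icc u v) ξ| ≤ M * smallDerivConst r / (b - a) ^ r := by
  induction r generalizing a b with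
  | zero =>
    refine ⟨a, left_mem_Icc.2 hab.le, ?_⟩
    simpa [smallDerivConst] using hM a ⟨hua, hab.le.trans hbv⟩
  | succ r ih =>
    -- Small values of the `r`-th derivative in the outer thirds of `[a, b]` are at distance
    -- at least `d`, so the mean value theorem gives a small slope between them.
    set d := (b - a) / 3 with hd
    have hd_pos : 0 < d := by positivity
    have hf' : ContDiffOn ℝ r f (Icc u v) := hf.of_le (by norm_cast; omega)
    obtain ⟨ξ₁, hξ₁, hgξ₁⟩ := ih hf' hua (by linarith : a < a + d) (by linarith)
    obtain ⟨ξ₂, hξ₂, hgξ₂⟩ := ih hf' (by linarith) (by linarith : b - d < b) hbv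
    rw [show a + d - a = d by ring] at hgξ₁
    rw [show b - (b - d) = d by ring] at hgξ₂
    have hgap : d ≤ ξ₂ - ξ₁ := by linarith [hξ₁.2, hξ₂.1]
    have hg : DifferentiableOn ℝ (iteratedDerivWithin r f (Icc u v)) (Icc u v) :=
      hf.differentiableOn_iteratedDerivWithin (by norm_cast; omega)
        (uniqueDiffOn_Icc (by linarith))
    obtain ⟨η, hη, hslope⟩ :=
      exists_derivWithin_Icc_eq_slope hg (hua.trans hξ₁.1) (by linarith) (hξ₂.2.trans hbv)
    refine ⟨η, ⟨by linarith [hη.1, hξ₁.1], by linarith [hη.2, hξ₂.2]⟩, ?_⟩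
    have hM₀ : 0 ≤ M * smallDerivConst r / d ^ r := (abs_nonneg _).trans hgξ₁
    calc |iteratedDerivWithin (r + 1) f (Icc u v) η|
        = |iteratedDerivWithin r f (Icc u v) ξ₂ - iteratedDerivWithin r f (Icc u v) ξ₁|
            / (ξ₂ - ξ₁) := by
          rw [iteratedDerivWithin_succ, hslope, abs_div, abs_of_pos (by linarith : 0 < ξ₂ - ξ₁)]
      _ ≤ 2 * (M * smallDerivConst r / d ^ r) / d := by
          gcongr
          exact (abs_sub _ _).trans (by linarith)
      _ = M * smallDerivConst (r + 1) / (b - a) ^ (r + 1) := by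
          have : b - a ≠ 0 := by linarith
          rw [smallDerivConst, hd, div_pow]
          field_simp
          ring

lemma abs_le_add_mul_of_norm_derivWithin_le {g : ℝ → ℝ} {u v A B ξ : ℝ}
    (hg : DifferentiableOn ℝ g (Icc u v)) (hB : ∀ y ∈ Icc u v, ‖derivWithin g (Icc u v) y‖ ≤ B)
    (hξ : ξ ∈ Icc u v) (hgξ : |g ξ| ≤ A) {x : ℝ} (hx : x ∈ Icc u v) :
    |g x| ≤ A + B * (v - u) := by
  have hB₀ : 0 ≤ B := (norm_nonneg _).trans (hB ξ hξ)
  have hlip := (convex_Icc u v).norm_image_sub_le_of_norm_derivWithin_le hg hB hξ hx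
  have hdist : |x - ξ| ≤ v - u := abs_sub_le_of_le_of_le hx.1 hx.2 hξ.1 hξ.2
  simp only [Real.norm_eq_abs] at hlip
  calc |g x| ≤ |g x - g ξ| + |g ξ| := sub_le_iff_le_add.1 (abs_sub_abs_le_abs_sub _ _)
    _ ≤ B * (v - u) + A := by gcongr; exact hlip.trans (by gcongr)
    _ = A + B * (v - u) := add_comm _ _

lemma abs_le_add_of_holder_unitInterval {g : ℝ → ℝ} {L α A ξ : ℝ} (hL : 0 ≤ L) (hα : 0 ≤ α)
    (hg : ∀ x ∈ Icc (0 : ℝ) 1, ∀ y ∈ Icc (0 : ℝ) 1, |g x - g y| ≤ L * |x - y| ^ α)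
    (hξ : ξ ∈ Icc (0 : ℝ) 1) (hgξ : |g ξ| ≤ A) {x : ℝ} (hx : x ∈ Icc (0 : ℝ) 1) :
    |g x| ≤ A + L := by
  have hdist : |x - ξ| ≤ 1 := by
    simpa using abs_sub_le_of_le_of_le hx.1 hx.2 hξ.1 hξ.2
  have hpow : |x - ξ| ^ α ≤ 1 := Real.rpow_le_one (abs_nonneg _) hdist hα
  calc |g x| ≤ |g x - g ξ| + |g ξ| := sub_le_iff_le_add.1 (abs_sub_abs_le_abs_sub _ _)
    _ ≤ L * 1 + A := by gcongr; exact (hg x hx ξ hξ).trans (by gcongr)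
    _ = A + L := by ring

lemma abs_iteratedDerivWithin_unitInterval_le {f : ℝ → ℝ} {M A : ℝ} {k : ℕ}
    (hf : ContDiffOn ℝ k f (Icc 0 1)) (hM : ∀ x ∈ Icc (0 : ℝ) 1, |f x| ≤ M)
    (hA : ∀ x ∈ Icc (0 : ℝ) 1, |iteratedDerivWithin k f (Icc 0 1) x| ≤ A)
    {r : ℕ} (hrk : r ≤ k) {x : ℝ} (hx : x ∈ Icc (0 : ℝ) 1) :
    |iteratedDerivWithin r f (Icc 0 1) x| ≤ ∑ i ∈ Finset.Ico r k, M * smallDerivConst i + A := by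
  induction hrk using Nat.decreasingInduction generalizing x with
  | self => simpa using hA x hx
  | of_succ r hrk ih =>
    obtain ⟨ξ, hξ, hgξ⟩ := exists_abs_iteratedDerivWithin_le (r := r)
      (hf.of_le (by norm_cast; omega)) hM le_rfl zero_lt_one le_rfl
    have hg : DifferentiableOn ℝ (iteratedDerivWithin r f (Icc 0 1)) (Icc 0 1) :=
      hf.differentiableOn_iteratedDerivWithin (by norm_cast) (uniqueDiffOn_Icc zero_lt_one)
    have hderiv : ∀ y ∈ Icc (0 : ℝ) 1,
        ‖derivWithin (iteratedDerivWithin r f (Icc 0 1)) (Icc 0 1) y‖ ≤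
          ∑ i ∈ Finset.Ico (r + 1) k, M * smallDerivConst i + A := fun y hy => by
      rw [← iteratedDerivWithin_succ]
      exact ih hy
    have := abs_le_add_mul_of_norm_derivWithin_le hg hderiv hξ (by simpa using hgξ) hx
    rw [Finset.sum_eq_sum_Ico_succ_bot hrk]
    linarith

theorem stmt1_general (β L : ℝ) (hL : 0 < L) (k : ℕ)
    (hk₁ : (k : ℝ) < β) :
    ∃ c : ℝ, ∀ f : ℝ → ℝ,
      ContDiffOn ℝ k f (Icc (0:ℝ) 1) →
      (∀ x ∈ Icc (0:ℝ) 1, |f x| ≤ 1) →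
      (∀ x ∈ Icc (0:ℝ) 1, ∀ y ∈ Icc (0:ℝ) 1,
        |iteratedDerivWithin k f (Icc (0:ℝ) 1) x -
          iteratedDerivWithin k f (Icc (0:ℝ) 1) y| ≤ L * |x - y| ^ (β - (k : ℝ))) →
      ∀ r : ℕ, 1 ≤ r → r ≤ k → ∀ x ∈ Icc (0:ℝ) 1,
        |iteratedDerivWithin r f (Icc (0:ℝ) 1) x| ≤ c := by
  refine ⟨∑ i ∈ Finset.range k, smallDerivConst i + (smallDerivConst k + L), ?_⟩
  intro f hf hf_le_one hholder r _ hrk x hx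
  obtain ⟨ξ, hξ, hgξ⟩ := exists_abs_iteratedDerivWithin_le hf hf_le_one le_rfl zero_lt_one le_rfl
  have htop (y : ℝ) (hy : y ∈ Icc (0 : ℝ) 1) :
      |iteratedDerivWithin k f (Icc 0 1) y| ≤ smallDerivConst k + L :=
    abs_le_add_of_holder_unitInterval hL.le (by linarith) hholder hξ (by simpa using hgξ) hy
  calc |iteratedDerivWithin r f (Icc 0 1) x|
      ≤ ∑ i ∈ Finset.Ico r k, 1 * smallDerivConst i + (smallDerivConst k + L) :=
        abs_iteratedDerivWithin_unitInterval_le hf hf_le_one htop hrk hx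
    _ ≤ ∑ i ∈ Finset.range k, smallDerivConst i + (smallDerivConst k + L) := by
        simp only [one_mul]
        gcongr
        · exact fun i _ _ => smallDerivConst_nonneg i
        · rw [Finset.range_eq_Ico]
          exact Finset.Ico_subset_Ico_left (Nat.zero_le r)

/-- Uniform boundedness of all intermediate derivatives of a β-Hölder
function on `[0,1]` that is bounded by 1. Here `k` is the largest integer strictly
less than `β`. -/
theorem stmt1 (β L : ℝ) (hβ : 0 < β) (hL : 0 < L) (k : ℕ)
    (hk₁ : (k : ℝ) < β) (hk₂ : β ≤ (k : ℝ) + 1) :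
    ∃ c : ℝ, ∀ f : ℝ → ℝ,
      ContDiffOn ℝ k f (Icc (0:ℝ) 1) →
      (∀ x ∈ Icc (0:ℝ) 1, |f x| ≤ 1) →
      (∀ x ∈ Icc (0:ℝ) 1, ∀ y ∈ Icc (0:ℝ) 1,
        |iteratedDerivWithin k f (Icc (0:ℝ) 1) x -
          iteratedDerivWithin k f (Icc (0:ℝ) 1) y| ≤ L * |x - y| ^ (β - (k : ℝ))) →
      ∀ r : ℕ, 1 ≤ r → r ≤ k → ∀ x ∈ Icc (0:ℝ) 1,
        |iteratedDerivWithin r f (Icc (0:ℝ) 1) x| ≤ c :=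
  stmt1_general β L hL k hk₁
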